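/- arXiv:1605.00693 — 4 statements merged into one kernel-verified Lean document; each statement's English description precedes it below -/
import Mathlib

section
/- Let M1, M2, N1, N2 be positive integers with M2 ≤ N1 + N2, and let α ≥ 0 be real. Define, for integers 0 ≤ r ≤ M2, g(r) = f(N1,(1,M1),(α,M2−r))/min(M2,N1) + f(M2−r,(α,N1),(1,N2))/min(M2,N1+N2) − α·min(M2−r,N1)/min(M2,N1). Then g(r) ≤ g(0) for all integers 0 ≤ r ≤ M2. -/
/-- The function `f(u,(a1,u1),(a2,u2))` from Lemma 1: with `{i1,i2} = {1,2}` chosen so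
that `a_{i1} ≥ a_{i2}`, `f = min(u,u_{i1})·a_{i1}⁺ + min((u-u_{i1})⁺,u_{i2})·a_{i2}⁺`. -/
noncomputable def fG (u u1 u2 : ℕ) (a1 a2 : ℝ) : ℝ :=
  if a2 ≤ a1 then
    min (u : ℝ) u1 * max a1 0 + min (max ((u : ℝ) - u1) 0) u2 * max a2 0
  else
    min (u : ℝ) u2 * max a2 0 + min (max ((u : ℝ) - u2) 0) u1 * max a1 0

/-- Real version of `fG`. -/
noncomputable def fR (u u1 u2 a1 a2 : ℝ) : ℝ :=
  if a2 ≤ a1 then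
    min u u1 * max a1 0 + min (max (u - u1) 0) u2 * max a2 0
  else
    min u u2 * max a2 0 + min (max (u - u2) 0) u1 * max a1 0

lemma fG_eq_fR (u u1 u2 : ℕ) (a1 a2 : ℝ) :
    fG u u1 u2 a1 a2 = fR u u1 u2 a1 a2 := rfl

lemma sum_min (u x y : ℝ) (hx : 0 ≤ x) (hy : 0 ≤ y) (hu : 0 ≤ u) (huxy : u ≤ x + y) :
    min u x + min (max (u - x) 0) y = u := by
  rcases le_total u x with h | h
  · rw [min_eq_left h, max_eq_right (by linarith : u - x ≤ 0), min_eq_left hy, add_zero]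
  · rw [min_eq_right h, max_eq_left (by linarith : (0:ℝ) ≤ u - x),
      min_eq_left (by linarith : u - x ≤ y)]
    ring

lemma max_sub_eq (c t : ℝ) : max (c - t) 0 = c - min t c := by
  rcases le_total t c with h | h
  · rw [min_eq_left h, max_eq_left (by linarith)]
  · rw [min_eq_right h, max_eq_right (by linarith)]
    ring

lemma min_lip (p q y : ℝ) (h : q ≤ p) : min p y - min q y ≤ p - q := by
  rcases le_total p y with h1 | h1 <;> rcases le_total q y with h2 | h2 <;>
    simp [min_eq_left, min_eq_right, h1, h2] <;> linarith

lemma lip3 (c S b a1 : ℝ) (hSb : S ≤ b) :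
    min (max (c - S) 0) a1 - min (max (c - b) 0) a1 ≤ min b c - min S c := by
  have h1 : max (c - S) 0 = c - min S c := max_sub_eq c S
  have h2 : max (c - b) 0 = c - min b c := max_sub_eq c b
  have hm : min S c ≤ min b c := min_le_min hSb le_rfl
  have := min_lip (c - min S c) (c - min b c) a1 (by linarith)
  rw [h1, h2]
  linarith

lemma h5lem (S b c : ℝ) (hS0 : 0 ≤ S) (hSb : S ≤ b) (hc : 0 ≤ c) :
    S * min b c ≤ b * min S c := by
  rcases le_total S c with h | h
  · rw [min_eq_left h]
    have h1 : min b c ≤ b := min_le_left _ _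
    nlinarith
  · rw [min_eq_right h]
    have h1 : min b c ≤ c := min_le_right _ _
    have h2 : (0:ℝ) ≤ min b c := le_min (by linarith) hc
    nlinarith

lemma key (a1 b c d S α : ℝ) (hb : 0 < b) (hc : 0 < c) (hd : 0 < d)
    (hbcd : b ≤ c + d) (hα : 0 ≤ α) (hS0 : 0 ≤ S) (hSb : S ≤ b) :
    fR c a1 S 1 α / min b c + fR S c d α 1 / b - α * min S c / min b c
      ≤ fR c a1 b 1 α / min b c + fR b c d α 1 / b - α * min b c / min b c := by
  have hD1 : (0:ℝ) < min b c := lt_min hb hc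
  have ediv : ∀ P Q R : ℝ, P / min b c + Q / b - R / min b c
      = ((P - R) * b + Q * min b c) / (min b c * b) := by
    intro P Q R
    field_simp
    ring
  rw [ediv, ediv, div_le_div_iff_of_pos_right (by positivity)]
  have h5 := h5lem S b c hS0 hSb hc.le
  have hm : min S c ≤ min b c := min_le_min hSb le_rfl
  rcases lt_trichotomy α 1 with h1 | h1 | h1
  · -- α < 1
    have eA : ∀ t : ℝ, fR c a1 t 1 α
        = min c a1 + min (max (c - a1) 0) t * α := by
      intro t
      rw [fR, if_pos h1.le, max_eq_left (zero_le_one), max_eq_left hα, mul_one]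
    have eB : ∀ t : ℝ, fR t c d α 1
        = min t d + min (max (t - d) 0) c * α := by
      intro t
      rw [fR, if_neg (not_le.mpr h1), max_eq_left (zero_le_one), max_eq_left hα, mul_one]
    rw [eA, eA, eB, eB]
    have hsS := sum_min S d c hd.le hc.le hS0 (by linarith)
    have hsb := sum_min b d c hd.le hc.le hb.le (by linarith)
    have hsS' : α * min b c * (min S d + min (max (S - d) 0) c) = α * min b c * S := by
      rw [hsS]
    have hsb' : α * min b c * (min b d + min (max (b - d) 0) c) = α * min b c * b := by
      rw [hsb]
    have hp : min (max (c - a1) 0) S ≤ min (max (c - a1) 0) b :=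
      min_le_min le_rfl hSb
    have hA : 0 ≤ α * b * (min (max (c - a1) 0) b - min (max (c - a1) 0) S) :=
      mul_nonneg (mul_nonneg hα hb.le) (by linarith)
    have hq : min S d ≤ min b d := min_le_min hSb le_rfl
    have hB : 0 ≤ (1 - α) * min b c * (min b d - min S d) :=
      mul_nonneg (mul_nonneg (by linarith) hD1.le) (by linarith)
    have hD : 0 ≤ α * (b * min S c - S * min b c) :=
      mul_nonneg hα (by linarith)
    nlinarith [hA, hB, hD, hsS', hsb']
  · -- α = 1
    subst h1
    have eA : ∀ t : ℝ, fR c a1 t 1 1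
        = min c a1 + min (max (c - a1) 0) t := by
      intro t
      rw [fR, if_pos le_rfl, max_eq_left (zero_le_one), mul_one, mul_one]
    have eB : ∀ t : ℝ, fR t c d 1 1
        = min t c + min (max (t - c) 0) d := by
      intro t
      rw [fR, if_pos le_rfl, max_eq_left (zero_le_one), mul_one, mul_one]
    rw [eA, eA, eB, eB]
    have hsS := sum_min S c d hc.le hd.le hS0 (by linarith)
    have hsb := sum_min b c d hc.le hd.le hb.le (by linarith)
    have hsS' : (min S c + min (max (S - c) 0) d) * min b c = S * min b c := by rw [hsS]
    have hsb' : (min b c + min (max (b - c) 0) d) * min b c = b * min b c := by rw [hsb]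
    have hp : min (max (c - a1) 0) S ≤ min (max (c - a1) 0) b :=
      min_le_min le_rfl hSb
    have hp' := mul_le_mul_of_nonneg_right hp hb.le
    nlinarith [hp', h5, hsS', hsb']
  · -- α > 1
    have eA : ∀ t : ℝ, fR c a1 t 1 α
        = min c t * α + min (max (c - t) 0) a1 := by
      intro t
      rw [fR, if_neg (not_le.mpr h1), max_eq_left (zero_le_one), max_eq_left hα, mul_one]
    have eB : ∀ t : ℝ, fR t c d α 1
        = min t c * α + min (max (t - c) 0) d := by
      intro t
      rw [fR, if_pos h1.le, max_eq_left (zero_le_one), max_eq_left hα, mul_one]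
    rw [eA, eA, eB, eB]
    have hc1 : min c S = min S c := min_comm c S
    have hc2 : min c b = min b c := min_comm c b
    rw [hc1, hc2]
    have hLip := lip3 c S b a1 hSb
    have hL := mul_le_mul_of_nonneg_right hLip hb.le
    have hsS := sum_min S c d hc.le hd.le hS0 (by linarith)
    have hsb := sum_min b c d hc.le hd.le hb.le (by linarith)
    have hsS' : (min S c + min (max (S - c) 0) d) * min b c = S * min b c := by rw [hsS]
    have hsb' : (min b c + min (max (b - c) 0) d) * min b c = b * min b c := by rw [hsb]
    have hα2 : 0 ≤ (α - 1) * min b c * (min b c - min S c) :=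
      mul_nonneg (mul_nonneg (by linarith) hD1.le) (by linarith)
    nlinarith [hL, h5, hsS', hsb', hα2]

theorem rank_optimization (M1 M2 N1 N2 : ℕ) (hM1 : 0 < M1) (hM2 : 0 < M2)
    (hN1 : 0 < N1) (hN2 : 0 < N2) (hM2le : M2 ≤ N1 + N2) (α : ℝ) (hα : 0 ≤ α) :
    ∀ r : ℕ, r ≤ M2 →
      fG N1 M1 (M2 - r) 1 α / min (M2 : ℝ) N1
        + fG (M2 - r) N1 N2 α 1 / min (M2 : ℝ) (N1 + N2)
        - α * min ((M2 - r : ℕ) : ℝ) N1 / min (M2 : ℝ) N1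
      ≤ fG N1 M1 M2 1 α / min (M2 : ℝ) N1
        + fG M2 N1 N2 α 1 / min (M2 : ℝ) (N1 + N2)
        - α * min (M2 : ℝ) N1 / min (M2 : ℝ) N1 := by
  intro r hr
  have hcast : ((M2 : ℝ)) ≤ (N1 : ℝ) + (N2 : ℝ) := by exact_mod_cast hM2le
  have hmin2 : min (M2 : ℝ) ((N1 : ℝ) + (N2 : ℝ)) = (M2 : ℝ) := min_eq_left hcast
  simp only [fG_eq_fR] at *
  rw [hmin2]
  exact key (M1 : ℝ) (M2 : ℝ) (N1 : ℝ) (N2 : ℝ) ((M2 - r : ℕ) : ℝ) α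
    (by exact_mod_cast hM2) (by exact_mod_cast hN1) (by exact_mod_cast hN2)
    hcast hα (by positivity) (by exact_mod_cast Nat.sub_le M2 r)
end

section
/- Let M1, M2, N1, N2 be positive integers satisfying M1 ≤ N1, N1 ≤ M1 + M2, N2 ≤ M2, M2 ≤ N1 + N2, let N1' = min(M2,N1), and let 0 ≤ α ≤ 1. If (N1 − M1)/N1' ≥ N2/M2, then for every pair (d1,d2) of nonnegative reals with d1 ≤ M1, d2 ≤ N2, and d1/N1' + d2/M2 ≤ (M1 + (N1−M1)α)/N1' + (N2 + (M2−N2)α)/M2 − α, the point (M1, N2) dominates: d1 + d2 ≤ M1 + N2, and moreover the point (M1, N2) itself satisfies all three constraints. -/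
theorem weak_caseI_region (M1 M2 N1 N2 : ℕ)
    (hM1 : 0 < M1) (hM2 : 0 < M2) (hN1 : 0 < N1) (hN2 : 0 < N2)
    (h1 : M1 ≤ N1) (h2 : N1 ≤ M1 + M2) (h3 : N2 ≤ M2) (h4 : M2 ≤ N1 + N2)
    (α : ℝ) (hα0 : 0 ≤ α) (hα1 : α ≤ 1)
    (N1' : ℝ) (hN1' : N1' = min (M2 : ℝ) (N1 : ℝ))
    (hcase : ((N1 : ℝ) - M1) / N1' ≥ (N2 : ℝ) / M2) :
    (∀ d1 d2 : ℝ, 0 ≤ d1 → 0 ≤ d2 → d1 ≤ M1 → d2 ≤ N2 →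
        d1 / N1' + d2 / M2 ≤
          ((M1 : ℝ) + ((N1 : ℝ) - M1) * α) / N1'
            + ((N2 : ℝ) + ((M2 : ℝ) - N2) * α) / M2 - α →
        d1 + d2 ≤ (M1 : ℝ) + N2)
    ∧ ((M1 : ℝ) ≤ M1 ∧ (N2 : ℝ) ≤ N2 ∧
        (M1 : ℝ) / N1' + (N2 : ℝ) / M2 ≤
          ((M1 : ℝ) + ((N1 : ℝ) - M1) * α) / N1'
            + ((N2 : ℝ) + ((M2 : ℝ) - N2) * α) / M2 - α) := by
  have hM2' : (0:ℝ) < M2 := by exact_mod_cast hM2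
  refine ⟨fun d1 d2 _ _ hd1 hd2 _ => by linarith, le_refl _, le_refl _, ?_⟩
  have key : 0 ≤ (((N1:ℝ)-M1)/N1' - N2/M2) * α := mul_nonneg (by linarith) hα0
  have e1 : ((M1:ℝ) + ((N1:ℝ)-M1)*α)/N1' = M1/N1' + ((N1:ℝ)-M1)/N1' * α := by
    rw [add_div, mul_div_right_comm]
  have e2 : ((N2:ℝ) + ((M2:ℝ)-N2)*α)/M2 = N2/M2 + ((M2:ℝ)-N2)/M2 * α := by
    rw [add_div, mul_div_right_comm]
  have e3 : ((M2:ℝ)-N2)/M2 = 1 - N2/M2 := by field_simp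
  rw [e1, e2, e3]
  nlinarith [key]
end

section
/- Let M1, M2, N1, N2 be positive integers satisfying M1 ≤ N1, N1 ≤ M1 + M2, N2 ≤ M2, M2 ≤ N1 + N2, let N1' = min(M2,N1), and let α > 1 with α < 1 + N2/N1' − M2(N1−M1)/(N1')². Then the maximum of d1 + d2 over all nonnegative (d1,d2) with d1 ≤ M1, d2 ≤ N2, and d1/N1' + d2/M2 ≤ N1/N1' + (α−1)N1'/M2 equals N2 + N1 − (N2+N1')·N1'/M2 + (N1')²·α/M2, attained at P1 = (N1 + (N1'/M2)((α−1)N1' − N2), N2). -/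
lemma sumGDoF_aux1 (N1 N2 N1' M2 α : ℝ) (h : M2 ≠ 0) :
    (N1 + (N1' / M2) * ((α - 1) * N1' - N2)) + N2
      = N2 + N1 - (N2 + N1') * N1' / M2 + N1' ^ 2 * α / M2 := by
  field_simp; ring

lemma sumGDoF_aux2 (N1 N2 N1' M2 α : ℝ) (hm : M2 ≠ 0) (hn : N1' ≠ 0) :
    (N1 + (N1' / M2) * ((α - 1) * N1' - N2)) / N1' + N2 / M2
      = N1 / N1' + (α - 1) * N1' / M2 := by
  field_simp; ring

lemma sumGDoF_aux3 (N1 N2 N1' M2 α : ℝ) (h : M2 ≠ 0) :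
    N2 + N1 - (N2 + N1') * N1' / M2 + N1' ^ 2 * α / M2
      = (N2 * M2 + N1 * M2 - (N2 + N1') * N1' + N1' ^ 2 * α) / M2 := by
  field_simp

lemma sumGDoF_aux4 (d1 d2 N1' M2 : ℝ) (hm : M2 ≠ 0) (hn : N1' ≠ 0) :
    d1 / N1' + d2 / M2 = (d1 * M2 + d2 * N1') / (N1' * M2) := by
  field_simp

lemma sumGDoF_aux5 (N1 N1' M2 α : ℝ) (hm : M2 ≠ 0) (hn : N1' ≠ 0) :
    N1 / N1' + (α - 1) * N1' / M2 = (N1 * M2 + (α - 1) * N1' ^ 2) / (N1' * M2) := by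
  field_simp

lemma sumGDoF_aux6 (N1 N1' M2 α N2 : ℝ) (h : M2 ≠ 0) :
    N1 + (N1' / M2) * ((α - 1) * N1' - N2)
      = (N1 * M2 + N1' * ((α - 1) * N1' - N2)) / M2 := by
  field_simp

theorem strong_caseII_sumGDoF (M1 M2 N1 N2 : ℕ)
    (hM1 : 0 < M1) (hM2 : 0 < M2) (hN1 : 0 < N1) (hN2 : 0 < N2)
    (h1 : M1 ≤ N1) (h2 : N1 ≤ M1 + M2) (h3 : N2 ≤ M2) (h4 : M2 ≤ N1 + N2)
    (α : ℝ) (hα : 1 < α)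
    (N1' : ℝ) (hN1' : N1' = min (M2 : ℝ) (N1 : ℝ))
    (hcase : α < 1 + (N2 : ℝ) / N1' - (M2 : ℝ) * ((N1 : ℝ) - M1) / (N1' ^ 2)) :
    IsGreatest
      {s : ℝ | ∃ d1 d2 : ℝ, 0 ≤ d1 ∧ 0 ≤ d2 ∧ d1 ≤ M1 ∧ d2 ≤ N2 ∧
        d1 / N1' + d2 / M2 ≤ (N1 : ℝ) / N1' + (α - 1) * N1' / M2 ∧
        s = d1 + d2}
      ((N2 : ℝ) + N1 - ((N2 : ℝ) + N1') * N1' / M2 + N1' ^ 2 * α / M2)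
    ∧ ((N1 : ℝ) + (N1' / M2) * ((α - 1) * N1' - N2)) + (N2 : ℝ)
        = (N2 : ℝ) + N1 - ((N2 : ℝ) + N1') * N1' / M2 + N1' ^ 2 * α / M2 := by
  have hM2R : (0:ℝ) < M2 := by exact_mod_cast hM2
  have hN1R : (0:ℝ) < N1 := by exact_mod_cast hN1
  have hN2R : (0:ℝ) < N2 := by exact_mod_cast hN2
  have hN1'pos : 0 < N1' := by rw [hN1']; exact lt_min hM2R hN1R
  have hle1 : N1' ≤ M2 := by rw [hN1']; exact min_le_left _ _
  have hle2 : N1' ≤ N1 := by rw [hN1']; exact min_le_right _ _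
  have h3R : (N2:ℝ) ≤ M2 := by exact_mod_cast h3
  have h1R : (M1:ℝ) ≤ N1 := by exact_mod_cast h1
  have hM2ne : (M2:ℝ) ≠ 0 := ne_of_gt hM2R
  have hN1'ne : N1' ≠ 0 := ne_of_gt hN1'pos
  have hkey : (α - 1) * N1' ^ 2 < N2 * N1' - M2 * ((N1:ℝ) - M1) := by
    have hc2 : α - 1 < (N2:ℝ) / N1' - (M2:ℝ) * ((N1:ℝ) - M1) / (N1' ^ 2) := by linarith
    have h := mul_lt_mul_of_pos_right hc2 (pow_pos hN1'pos 2)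
    have e : ((N2:ℝ) / N1' - (M2:ℝ) * ((N1:ℝ) - M1) / (N1' ^ 2)) * N1' ^ 2
        = N2 * N1' - M2 * ((N1:ℝ) - M1) := by field_simp
    rw [e] at h; exact h
  constructor
  · constructor
    · refine ⟨(N1:ℝ) + (N1' / M2) * ((α - 1) * N1' - N2), (N2:ℝ), ?_, le_of_lt hN2R, ?_, le_refl _, ?_, by ring⟩
      · rw [sumGDoF_aux6 _ _ _ _ _ hM2ne]
        apply div_nonneg _ (le_of_lt hM2R)
        nlinarith
      · rw [sumGDoF_aux6 _ _ _ _ _ hM2ne, div_le_iff₀ hM2R]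
        nlinarith
      · rw [sumGDoF_aux2 _ _ _ _ _ hM2ne hN1'ne]
    · rintro s ⟨d1, d2, hd1, hd2, hd1M, hd2N, hcon, rfl⟩
      have hcon' : d1 * M2 + d2 * N1' ≤ N1 * M2 + (α - 1) * N1' ^ 2 := by
        rw [sumGDoF_aux4 _ _ _ _ hM2ne hN1'ne, sumGDoF_aux5 _ _ _ _ hM2ne hN1'ne,
          div_le_div_iff_of_pos_right (by positivity)] at hcon
        exact hcon
      rw [sumGDoF_aux3 _ _ _ _ _ hM2ne, le_div_iff₀ hM2R]
      nlinarith [mul_nonneg (sub_nonneg.mpr hle1) (sub_nonneg.mpr hd2N)]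
  · exact sumGDoF_aux1 _ _ _ _ _ hM2ne
end

section
/- Corner point P1 achieves the weak-interference sum-GDoF: under assumptions M1 ≤ N1 ≤ M1 + M2, N2 ≤ M2 ≤ N1 + N2, N1' = min(M2,N1), 0 ≤ α ≤ 1, and (N1−M1)/N1' < N2/M2, the power allocation A2 = (1 − N2/M2)·α satisfies (α − N2/N1')^+ ≤ A2 ≤ α, and substituting it into d1 = min(M1, M1 − α(M1+N1'−N1) + N1'·A2) and d2 = min(N2, N2 + α(M2−N2) − M2·A2) yields d1 = M1 − α(M1 + N1' − N1) + (N1'/M2)(M2−N2)α and d2 = N2. -/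
theorem weak_P1_achievable (M1 M2 N1 N2 : ℕ)
    (hM1 : 0 < M1) (hM2 : 0 < M2) (hN1 : 0 < N1) (hN2 : 0 < N2)
    (h1 : M1 ≤ N1) (h2 : N1 ≤ M1 + M2) (h3 : N2 ≤ M2) (h4 : M2 ≤ N1 + N2)
    (α : ℝ) (hα0 : 0 ≤ α) (hα1 : α ≤ 1)
    (N1' : ℝ) (hN1' : N1' = min (M2 : ℝ) (N1 : ℝ))
    (hcase : ((N1 : ℝ) - M1) / N1' < (N2 : ℝ) / M2)
    (A2 : ℝ) (hA2 : A2 = (1 - (N2 : ℝ) / M2) * α) :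
    max (α - (N2 : ℝ) / N1') 0 ≤ A2 ∧ A2 ≤ α
    ∧ min (M1 : ℝ) ((M1 : ℝ) - α * ((M1 : ℝ) + N1' - N1) + N1' * A2)
        = (M1 : ℝ) - α * ((M1 : ℝ) + N1' - N1) + (N1' / M2) * ((M2 : ℝ) - N2) * α
    ∧ min (N2 : ℝ) ((N2 : ℝ) + α * ((M2 : ℝ) - N2) - (M2 : ℝ) * A2) = (N2 : ℝ) := by
  have hM2R : (0:ℝ) < M2 := by exact_mod_cast hM2
  have hN1R : (0:ℝ) < N1 := by exact_mod_cast hN1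
  have hN2R : (0:ℝ) ≤ N2 := by positivity
  have h3R : (N2:ℝ) ≤ M2 := by exact_mod_cast h3
  have hN1'pos : 0 < N1' := by rw [hN1']; exact lt_min hM2R hN1R
  have hN1'M2 : N1' ≤ M2 := by rw [hN1']; exact min_le_left _ _
  refine ⟨?_, ?_, ?_, ?_⟩
  · apply max_le
    · rw [hA2]
      have h : α * N1' ≤ M2 := le_trans (mul_le_of_le_one_left (le_of_lt hN1'pos) hα1) hN1'M2
      have key : α * ((N2:ℝ)/M2) ≤ (N2:ℝ)/N1' := by
        rw [mul_div_assoc', div_le_div_iff₀ hM2R hN1'pos]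
        nlinarith
      have expand : (1 - (N2:ℝ)/M2) * α = α - α * ((N2:ℝ)/M2) := by ring
      linarith
    · rw [hA2]
      have : (N2:ℝ)/M2 ≤ 1 := by rw [div_le_one hM2R]; exact h3R
      nlinarith
  · rw [hA2]
    have : (0:ℝ) ≤ N2/M2 := by positivity
    nlinarith
  · have hkey : (N1:ℝ) - M1 < N1' * N2 / M2 := by
      rw [lt_div_iff₀ hM2R]
      rw [div_lt_div_iff₀ hN1'pos hM2R] at hcase
      nlinarith
    have hmul : α * ((N1:ℝ) - M1) ≤ α * (N1' * N2 / M2) :=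
      mul_le_mul_of_nonneg_left (le_of_lt hkey) hα0
    have : (M1:ℝ) - α * ((M1:ℝ) + N1' - N1) + N1' * A2 ≤ M1 := by
      rw [hA2]
      have expand : N1' * ((1 - (N2:ℝ)/M2) * α) = N1' * α - α * (N1' * N2 / M2) := by
        field_simp
      linarith
    rw [min_eq_right this, hA2]
    field_simp
  · have hexp : (N2:ℝ) + α * ((M2:ℝ) - N2) - (M2:ℝ) * A2 = N2 := by
      rw [hA2]; field_simp; ring
    rw [hexp, min_self]
end
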